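/- Let G = (V, E) be a simple undirected graph, let Λ be a strongly connected orientation of G, let v ∈ V, and let U be the set of vertices that two-reach v in the oriented digraph D = (V, Λ). Then the sum over u ∈ U of the indegree of u in Λ equals |E(G[U])| + c(G[V∖U]), where G[U] is the subgraph of G induced on U and c(G[V∖U]) is the number of connected components of the subgraph of G induced on V∖U. -/

import Mathlib

/-- The list of arcs (consecutive pairs) of a list of vertices. -/
def listArcs {V : Type*} (p : List V) : List (V × V) := p.zip p.tail

/-- `p` is a directed path from `u` to `v` in the digraph with arc set `A`. -/
def IsDipath {V : Type*} (A : Finset (V × V)) (u v : V) (p : List V) : Prop :=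
  p ≠ [] ∧ p.head? = some u ∧ p.getLast? = some v ∧ p.Nodup ∧
    p.Chain' (fun a b => (a, b) ∈ A)

/-- Two paths (given as vertex lists) are arc-disjoint. -/
def ArcDisjoint {V : Type*} (p q : List V) : Prop :=
  ∀ e ∈ listArcs p, e ∉ listArcs q

/-- `u` reaches `v`: there is a directed path from `u` to `v`. -/
def Reaches {V : Type*} (A : Finset (V × V)) (u v : V) : Prop :=
  ∃ p, IsDipath A u v p

/-- `u` two-reaches `v`: there are two arc-disjoint directed paths from `u` to `v`. -/
def TwoReaches {V : Type*} (A : Finset (V × V)) (u v : V) : Prop :=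
  ∃ p q, IsDipath A u v p ∧ IsDipath A u v q ∧ ArcDisjoint p q

/-- A digraph is strongly connected if every vertex reaches every other vertex. -/
def StronglyConnected {V : Type*} (A : Finset (V × V)) : Prop :=
  ∀ u v : V, Reaches A u v

/-- The digraph obtained by reversing every arc of the path `p`. -/
def reverseAlong {V : Type*} [DecidableEq V] (A : Finset (V × V)) (p : List V) :
    Finset (V × V) :=
  (A \ (listArcs p).toFinset) ∪ ((listArcs p).map Prod.swap).toFinset

/-- The indegree of a vertex in the digraph with arc set `A`. -/
def inDeg {V : Type*} [DecidableEq V] (A : Finset (V × V)) (v : V) : ℕ :=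
  (A.filter (fun e => e.2 = v)).card

/-- The indegree sequence: the indegrees of all vertices in non-increasing order. -/
def degSeq (V : Type*) [Fintype V] [DecidableEq V] (A : Finset (V × V)) : List ℕ :=
  ((Finset.univ.val.map (inDeg A)).sort (· ≤ ·)).reverse

/-- `A` is an orientation of the simple graph `G`: every edge of `G` gets exactly one
direction, and every arc of `A` comes from an edge of `G`. -/
def IsOrientation {V : Type*} (G : SimpleGraph V) (A : Finset (V × V)) : Prop :=
  (∀ a b : V, G.Adj a b ↔ ((a, b) ∈ A ∨ (b, a) ∈ A)) ∧
    ∀ a b : V, ¬((a, b) ∈ A ∧ (b, a) ∈ A)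

/-- The underlying undirected simple graph of a digraph. -/
def underlying {V : Type*} (A : Finset (V × V)) : SimpleGraph V :=
  SimpleGraph.fromRel (fun a b => (a, b) ∈ A)

/-- `p` is a directed path from `u` to `v` all of whose vertices lie in `S`. -/
def IsDipathIn {V : Type*} (A : Finset (V × V)) (S : Set V) (u v : V) (p : List V) : Prop :=
  IsDipath A u v p ∧ ∀ x ∈ p, x ∈ S

/-- `u` reaches `v` within the induced subdigraph on `S`. -/
def ReachesWithin {V : Type*} (A : Finset (V × V)) (S : Set V) (u v : V) : Prop :=
  ∃ p, IsDipathIn A S u v p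

/-!
Every arc with head in `U` either joins two vertices of `U` or enters `U` from outside, so it
suffices to show that every component of `G[V ∖ U]` sends exactly one arc into `U`.

At least one: a path from the component to `v ∈ U` has to leave it, and it leaves into `U`.

At most one: a vertex `x ∉ U` does not two-reach `v`, so by Menger's theorem a single arc `f`
separates `x` from `v`. Each vertex of `U` reaches `v` avoiding any single arc, so every arc from
`x` into `U` is `f`. The same `f` separates the whole component of `x` from `v`: across an edge
`cc'` with `c` separated, if `cc'` is an arc then `c'` is separated because `f` ends in `U`; if
`c'c` is an arc and `f'` separates `c'`, then on a path from `c` to `v` through both `f` and `f'`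
whichever comes first could be bypassed.
-/

lemma Relation.ReflTransGen.exists_exit {α : Type*} {r : α → α → Prop} {p : α → Prop} {a b : α}
    (h : Relation.ReflTransGen r a b) (ha : p a) (hb : ¬p b) :
    ∃ c d, Relation.ReflTransGen (fun s t => r s t ∧ p s ∧ p t) a c ∧ p c ∧ r c d ∧ ¬p d := by
  induction h using Relation.ReflTransGen.head_induction_on with
  | refl => exact absurd ha hb
  | @head a a' haa' _ ih =>
    by_cases ha' : p a'
    · obtain ⟨c, d, hac, hc, hcd, hd⟩ := ih ha'
      exact ⟨c, d, .head ⟨haa', ha, ha'⟩ hac, hc, hcd, hd⟩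
    · exact ⟨a, a', .refl, ha, haa', ha'⟩

section Paths

variable {V : Type*} {A B : Finset (V × V)} {u v w : V} {p : List V}

@[simp] lemma listArcs_cons_cons (a b : V) (t : List V) :
    listArcs (a :: b :: t) = (a, b) :: listArcs (b :: t) := rfl

lemma mem_of_mem_listArcs {e : V × V} (h : e ∈ listArcs p) : e.1 ∈ p ∧ e.2 ∈ p :=
  ⟨(List.of_mem_zip h).1, List.mem_of_mem_tail (List.of_mem_zip h).2⟩

lemma listArcs_nodup (hp : p.Nodup) : (listArcs p).Nodup := by
  refine List.Nodup.of_map Prod.snd ?_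
  rw [listArcs, List.map_snd_zip (by simp)]
  exact hp.sublist (List.tail_sublist p)

lemma isChain_iff_forall_listArcs {R : V → V → Prop} :
    p.IsChain R ↔ ∀ e ∈ listArcs p, R e.1 e.2 := by
  induction p using List.twoStepInduction with
  | nil | singleton => simp [listArcs]
  | cons_cons a b t _ ih => simp [List.isChain_cons_cons, ih]

lemma listArcs_exit_unique {S : Set V} {a b c d : V} (ha : a ∈ S) (hb : b ∉ S) (hc : c ∈ S)
    (hd : d ∉ S) : ∀ {p : List V}, p.Pairwise (fun a b => b ∈ S → a ∈ S) →
      (a, b) ∈ listArcs p → (c, d) ∈ listArcs p → (a, b) = (c, d)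
  | [], _, hab, _ | [_], _, hab, _ => by simp [listArcs] at hab
  | x :: y :: t, hp, hab, hcd => by
    obtain ⟨-, hyt⟩ := List.pairwise_cons.1 hp
    have hy : ∀ z ∈ y :: t, z ∈ S → y ∈ S := fun z hz hzS =>
      (List.mem_cons.1 hz).elim (· ▸ hzS) fun hz => List.rel_of_pairwise_cons hyt hz hzS
    rw [listArcs_cons_cons, List.mem_cons] at hab hcd
    rcases hab with hab | hab <;> rcases hcd with hcd | hcd
    · rw [hab, hcd]
    · cases hab
      exact absurd (hy c (mem_of_mem_listArcs hcd).1 hc) hb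
    · cases hcd
      exact absurd (hy a (mem_of_mem_listArcs hab).1 ha) hd
    · exact listArcs_exit_unique ha hb hc hd hyt hab hcd

lemma IsDipath.arc_mem (hp : IsDipath A u v p) {e : V × V} (he : e ∈ listArcs p) : e ∈ A :=
  isChain_iff_forall_listArcs.1 hp.2.2.2.2 e he

lemma IsDipath.mono (hp : IsDipath A u v p) (hB : ∀ e ∈ listArcs p, e ∈ B) : IsDipath B u v p :=
  ⟨hp.1, hp.2.1, hp.2.2.1, hp.2.2.2.1, isChain_iff_forall_listArcs.2 hB⟩

lemma isDipath_singleton (A : Finset (V × V)) (v : V) : IsDipath A v v [v] :=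
  ⟨by simp, rfl, rfl, by simp, List.isChain_singleton v⟩

lemma IsDipath.listArcs_toFinset [DecidableEq V] (hp : IsDipath A u v p) :
    IsDipath (listArcs p).toFinset u v p :=
  hp.mono fun _ he => List.mem_toFinset.2 he

lemma reaches_cons (huw : (u, w) ∈ A) (h : Reaches A w v) : Reaches A u v := by
  obtain ⟨q, hne, hhead, hlast, hnd, hch⟩ := h
  by_cases hu : u ∈ q
  · -- shortcut `q` at its visit of `u`
    obtain ⟨s, t, rfl⟩ := List.append_of_mem hu
    refine ⟨u :: t, by simp, rfl, ?_, (List.nodup_append.1 hnd).2.1,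
      (List.isChain_append.1 hch).2.1⟩
    simpa [List.getLast?_append] using hlast
  · obtain ⟨c, t, rfl⟩ := List.exists_cons_of_ne_nil hne
    obtain rfl : c = w := by simpa using hhead
    exact ⟨u :: c :: t, by simp, rfl, by simpa using hlast, List.nodup_cons.2 ⟨hu, hnd⟩,
      List.isChain_cons_cons.2 ⟨huw, hch⟩⟩

lemma reaches_iff_reflTransGen :
    Reaches A u v ↔ Relation.ReflTransGen (fun a b => (a, b) ∈ A) u v := by
  constructor
  · rintro ⟨p, hne, hhead, hlast, -, hch⟩
    obtain ⟨c, t, rfl⟩ := List.exists_cons_of_ne_nil hne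
    obtain rfl : c = u := by simpa using hhead
    exact List.relationReflTransGen_of_exists_isChain_cons t hch
      (Option.some_injective _ (by rw [← hlast, List.getLast?_eq_some_getLast]))
  · intro h
    induction h using Relation.ReflTransGen.head_induction_on with
    | refl => exact ⟨[v], isDipath_singleton A v⟩
    | head huw _ ih => exact reaches_cons huw ih

lemma reaches_refl (A : Finset (V × V)) (v : V) : Reaches A v v :=
  ⟨[v], isDipath_singleton A v⟩

lemma Reaches.trans (huv : Reaches A u v) (hvw : Reaches A v w) : Reaches A u w :=
  reaches_iff_reflTransGen.2
    ((reaches_iff_reflTransGen.1 huv).trans (reaches_iff_reflTransGen.1 hvw))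

lemma reaches_of_mem (h : (u, v) ∈ A) : Reaches A u v :=
  reaches_iff_reflTransGen.2 (.single h)

lemma Reaches.mono (h : Reaches A u v) (hAB : A ⊆ B) : Reaches B u v :=
  reaches_iff_reflTransGen.2 (.mono (fun _ _ hab => hAB hab) _ _ (reaches_iff_reflTransGen.1 h))

lemma Reaches.exists_exit {S : Set V} (h : Reaches A u v) (hu : u ∈ S) (hv : v ∉ S) :
    ∃ a b, (a, b) ∈ A ∧ a ∈ S ∧ b ∉ S := by
  obtain ⟨a, b, -, ha, hab, hb⟩ := (reaches_iff_reflTransGen.1 h).exists_exit hu hv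
  exact ⟨a, b, hab, ha, hb⟩

lemma twoReaches_refl (A : Finset (V × V)) (v : V) : TwoReaches A v v :=
  ⟨[v], [v], isDipath_singleton A v, isDipath_singleton A v, by simp [ArcDisjoint, listArcs]⟩

lemma TwoReaches.mono (h : TwoReaches A u v) (hAB : A ⊆ B) : TwoReaches B u v := by
  obtain ⟨p, q, hp, hq, hpq⟩ := h
  exact ⟨p, q, hp.mono fun _ he => hAB (hp.arc_mem he), hq.mono fun _ he => hAB (hq.arc_mem he),
    hpq⟩

end Paths

section SingleArcCuts

variable {V : Type*} [DecidableEq V] {A : Finset (V × V)} {c d u v : V} {f f' : V × V}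

lemma TwoReaches.reaches_erase (h : TwoReaches A u v) (f : V × V) : Reaches (A.erase f) u v := by
  obtain ⟨p, q, hp, hq, hpq⟩ := h
  by_cases hfp : f ∈ listArcs p
  · exact ⟨q, hq.mono fun e he => Finset.mem_erase.2 ⟨fun h => hpq f hfp (h ▸ he), hq.arc_mem he⟩⟩
  · exact ⟨p, hp.mono fun e he => Finset.mem_erase.2 ⟨fun h => hfp (h ▸ he), hp.arc_mem he⟩⟩

lemma eq_of_not_reaches_erase (hc : ¬Reaches (A.erase f) c v) (hcd : (c, d) ∈ A)
    (hd : Reaches (A.erase f) d v) : (c, d) = f := by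
  by_contra hne
  exact hc ((reaches_of_mem (Finset.mem_erase.2 ⟨hne, hcd⟩)).trans hd)

lemma reaches_snd_of_not_reaches_erase (hc : Reaches A c v) (hf : ¬Reaches (A.erase f) c v) :
    Reaches A f.2 v := by
  induction reaches_iff_reflTransGen.1 hc using Relation.ReflTransGen.head_induction_on with
  | refl => exact absurd (reaches_refl _ _) hf
  | @head c d hcd hdv ih =>
    by_cases hd : Reaches (A.erase f) d v
    · exact eq_of_not_reaches_erase hf hcd hd ▸ reaches_iff_reflTransGen.2 hdv
    · exact ih (reaches_iff_reflTransGen.2 hdv) hd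

/-- Whichever of `f`, `f'` a walk from `c` to `v` meets first can be bypassed. -/
lemma reaches_erase_or_reaches_erase (hc : Reaches A c v) (hff' : f ≠ f')
    (hf : Reaches (A.erase f') f.2 v) (hf' : Reaches (A.erase f) f'.2 v) :
    Reaches (A.erase f) c v ∨ Reaches (A.erase f') c v := by
  induction reaches_iff_reflTransGen.1 hc using Relation.ReflTransGen.head_induction_on with
  | refl => exact .inl (reaches_refl _ _)
  | @head c d hcd hdv ih =>
    by_cases h : (c, d) = f
    · subst h
      exact .inr ((reaches_of_mem (Finset.mem_erase.2 ⟨hff', hcd⟩)).trans hf)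
    by_cases h' : (c, d) = f'
    · subst h'
      exact .inl ((reaches_of_mem (Finset.mem_erase.2 ⟨Ne.symm hff', hcd⟩)).trans hf')
    exact (ih (reaches_iff_reflTransGen.2 hdv)).imp
      (reaches_of_mem (Finset.mem_erase.2 ⟨h, hcd⟩)).trans
      (reaches_of_mem (Finset.mem_erase.2 ⟨h', hcd⟩)).trans

end SingleArcCuts

section NetOutflow

variable {V : Type*} [DecidableEq V] {A M N : Finset (V × V)} {x v w : V}

def arcOutflow (e : V × V) (w : V) : ℤ :=
  (if e.1 = w then 1 else 0) - if e.2 = w then 1 else 0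

def netOutflow (M : Finset (V × V)) (w : V) : ℤ :=
  ∑ e ∈ M, arcOutflow e w

lemma netOutflow_union (h : Disjoint M N) :
    netOutflow (M ∪ N) w = netOutflow M w + netOutflow N w :=
  Finset.sum_union h

lemma netOutflow_sdiff (h : N ⊆ M) : netOutflow (M \ N) w = netOutflow M w - netOutflow N w :=
  Finset.sum_sdiff_eq_sub h

lemma netOutflow_erase {e : V × V} (he : e ∈ M) :
    netOutflow (M.erase e) w = netOutflow M w - arcOutflow e w :=
  Finset.sum_erase_eq_sub he

lemma netOutflow_image_swap : netOutflow (M.image Prod.swap) w = -netOutflow M w := by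
  rw [netOutflow, netOutflow, Finset.sum_image Prod.swap_injective.injOn,
    ← Finset.sum_neg_distrib]
  simp [arcOutflow]

lemma sum_map_arcOutflow_listArcs (w : V) : ∀ (x : V) (t : List V),
    ((listArcs (x :: t)).map (arcOutflow · w)).sum
      = arcOutflow (x, (x :: t).getLast (List.cons_ne_nil x t)) w
  | x, [] => (sub_self _).symm
  | x, y :: t => by
    rw [listArcs_cons_cons, List.map_cons, List.sum_cons, sum_map_arcOutflow_listArcs w y t,
      List.getLast_cons_cons]
    simp only [arcOutflow]
    ring

lemma netOutflow_listArcs {p : List V} (hp : IsDipath A x v p) :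
    netOutflow (listArcs p).toFinset w = arcOutflow (x, v) w := by
  obtain ⟨hne, hhead, hlast, hnd, -⟩ := hp
  obtain ⟨y, t, rfl⟩ := List.exists_cons_of_ne_nil hne
  obtain rfl : x = y := by simpa using hhead.symm
  have hv : (x :: t).getLast (List.cons_ne_nil x t) = v :=
    Option.some_injective _ (by rw [← hlast, List.getLast?_eq_some_getLast])
  rw [netOutflow, List.sum_toFinset _ (listArcs_nodup hnd), sum_map_arcOutflow_listArcs, hv]

lemma netOutflow_cancel_opposite {R Q : Finset (V × V)} (hRQ : Disjoint R Q) :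
    netOutflow ((R \ Q.image Prod.swap) ∪ (Q \ R.image Prod.swap)) w
      = netOutflow R w + netOutflow Q w := by
  have hswap : R ∩ Q.image Prod.swap = (Q ∩ R.image Prod.swap).image Prod.swap := by
    ext ⟨a, b⟩
    simp only [Finset.mem_inter, Finset.mem_image, Prod.exists, Prod.swap_prod_mk, Prod.mk.injEq]
    grind
  have hR := Finset.sum_inter_add_sum_sdiff R (Q.image Prod.swap) (arcOutflow · w)
  have hQ := Finset.sum_inter_add_sum_sdiff Q (R.image Prod.swap) (arcOutflow · w)
  rw [hswap] at hR
  have himage := netOutflow_image_swap (M := Q ∩ R.image Prod.swap) (w := w)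
  rw [netOutflow_union (hRQ.mono Finset.sdiff_subset Finset.sdiff_subset)]
  simp only [netOutflow] at himage ⊢
  linarith

lemma reaches_of_netOutflow (hx : 1 ≤ netOutflow M x)
    (hw : ∀ w, w ≠ x → w ≠ v → 0 ≤ netOutflow M w) : Reaches M x v := by
  induction M using Finset.strongInduction generalizing x with
  | H M ih =>
    by_cases hxv : x = v
    · exact hxv ▸ reaches_refl M x
    obtain ⟨⟨x', y⟩, he, rfl⟩ : ∃ e ∈ M, e.1 = x := by
      by_contra! h
      have : netOutflow M x ≤ 0 :=
        Finset.sum_nonpos fun e he => by simp [arcOutflow, h e he]; positivity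
      omega
    by_cases hyv : y = v
    · exact hyv ▸ reaches_of_mem he
    refine reaches_cons he ((ih _ (Finset.erase_ssubset he) ?_ fun w hwy hwv => ?_).mono
      (Finset.erase_subset _ _))
    · rw [netOutflow_erase he, arcOutflow]
      by_cases hyx : y = x'
      · subst hyx
        simpa using hx
      · simpa [Ne.symm hyx] using hw y hyx hyv
    · rw [netOutflow_erase he, arcOutflow]
      by_cases hwx : w = x'
      · subst hwx
        simp [Ne.symm hwy]
        omega
      · simpa [Ne.symm hwx, Ne.symm hwy] using hw w hwx hwv

lemma twoReaches_of_netOutflow (hx : 2 ≤ netOutflow M x)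
    (hw : ∀ w, w ≠ x → w ≠ v → 0 ≤ netOutflow M w) : TwoReaches M x v := by
  by_cases hxv : x = v
  · exact hxv ▸ twoReaches_refl M x
  obtain ⟨p, hp⟩ := reaches_of_netOutflow (by omega) hw
  have hpM : (listArcs p).toFinset ⊆ M := fun e he => hp.arc_mem (List.mem_toFinset.1 he)
  have hrest : ∀ w, netOutflow (M \ (listArcs p).toFinset) w
      = netOutflow M w - arcOutflow (x, v) w := fun w => by
    rw [netOutflow_sdiff hpM, netOutflow_listArcs hp]
  obtain ⟨q, hq⟩ : Reaches (M \ (listArcs p).toFinset) x v :=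
    reaches_of_netOutflow (by simp [hrest, arcOutflow]; omega) fun w hwx hwv => by
      simpa [hrest, arcOutflow, Ne.symm hwx, Ne.symm hwv] using hw w hwx hwv
  refine ⟨p, q, hp, hq.mono fun e he => (Finset.mem_sdiff.1 (hq.arc_mem he)).1,
    fun e hep heq => ?_⟩
  exact (Finset.mem_sdiff.1 (hq.arc_mem heq)).2 (List.mem_toFinset.2 hep)

end NetOutflow

section Menger

variable {V : Type*} [DecidableEq V] {A : Finset (V × V)} {x v : V}

lemma twoReaches_of_reaches_reverseAlong (hA : ∀ a b : V, ¬((a, b) ∈ A ∧ (b, a) ∈ A))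
    {P : List V} (hP : IsDipath A x v P) (hxv : x ≠ v)
    (hres : Reaches (reverseAlong A P) x v) : TwoReaches A x v := by
  obtain ⟨Q, hQ⟩ := hres
  set RP := (listArcs P).toFinset
  set RQ := (listArcs Q).toFinset
  have hRPA : RP ⊆ A := fun e he => hP.arc_mem (List.mem_toFinset.1 he)
  have hRQ : ∀ e ∈ RQ, (e ∈ A ∧ e ∉ RP) ∨ e ∈ RP.image Prod.swap := fun e he => by
    have := hQ.arc_mem (List.mem_toFinset.1 he)
    simp only [reverseAlong, Finset.mem_union, Finset.mem_sdiff, List.mem_toFinset,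
      List.mem_map] at this
    simpa [RP] using this
  have hdisj : Disjoint RP RQ := Finset.disjoint_left.2 fun e heP heQ =>
    (hRQ e heQ).elim (fun h => h.2 heP) fun h => by
      obtain ⟨g, hg, rfl⟩ := Finset.mem_image.1 h
      exact hA g.1 g.2 ⟨hRPA hg, hRPA heP⟩
  set M := (RP \ RQ.image Prod.swap) ∪ (RQ \ RP.image Prod.swap)
  have hMA : M ⊆ A := by
    intro e he
    rcases Finset.mem_union.1 he with he | he
    · exact hRPA (Finset.mem_sdiff.1 he).1
    · obtain ⟨heQ, heP⟩ := Finset.mem_sdiff.1 he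
      exact ((hRQ e heQ).resolve_right heP).1
  have hM : ∀ w, netOutflow M w = 2 * arcOutflow (x, v) w := fun w => by
    rw [netOutflow_cancel_opposite hdisj, netOutflow_listArcs hP, netOutflow_listArcs hQ]
    ring
  refine (twoReaches_of_netOutflow (by simp [hM, arcOutflow, Ne.symm hxv])
    fun w hwx hwv => ?_).mono hMA
  simp [hM, arcOutflow, Ne.symm hwx, Ne.symm hwv]

/-- Menger's theorem for two arc-disjoint paths, proved by one augmentation step: if the
residual digraph of a path `P` has no path from `x` to `v`, the unique arc by which `P` leaves
the residual reach of `x` separates `x` from `v`. -/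
lemma exists_not_reaches_erase (hA : ∀ a b : V, ¬((a, b) ∈ A ∧ (b, a) ∈ A))
    (hxv : Reaches A x v) (hx : ¬TwoReaches A x v) : ∃ f ∈ A, ¬Reaches (A.erase f) x v := by
  have hne : x ≠ v := fun h => hx (h ▸ twoReaches_refl A x)
  obtain ⟨P, hP⟩ := hxv
  set S := {w | Reaches (reverseAlong A P) x w}
  have hvS : v ∉ S := fun h => hx (twoReaches_of_reaches_reverseAlong hA hP hne h)
  have hxS : x ∈ S := reaches_refl _ x
  have hback : ∀ e ∈ listArcs P, e.2 ∈ S → e.1 ∈ S := fun e he h2 =>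
    h2.trans (reaches_of_mem (Finset.mem_union_right _
      (List.mem_toFinset.2 (List.mem_map.2 ⟨e, he, rfl⟩))))
  have hpair : P.Pairwise (fun a b => b ∈ S → a ∈ S) :=
    @List.IsChain.pairwise _ _ _ ⟨fun h₁ h₂ hc => h₁ (h₂ hc)⟩
      (isChain_iff_forall_listArcs.2 hback)
  obtain ⟨a, b, hab, ha, hb⟩ :=
    Reaches.exists_exit (A := (listArcs P).toFinset) ⟨P, hP.listArcs_toFinset⟩ hxS hvS
  have hab := List.mem_toFinset.1 hab
  refine ⟨(a, b), hP.arc_mem hab, fun h => ?_⟩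
  obtain ⟨c, d, hcd, hc, hd⟩ := h.exists_exit hxS hvS
  obtain ⟨hcdf, hcdA⟩ := Finset.mem_erase.1 hcd
  have hcdP : (c, d) ∈ listArcs P := by
    by_contra hnot
    exact hd (hc.trans (reaches_of_mem (Finset.mem_union_left _
      (Finset.mem_sdiff.2 ⟨hcdA, fun h => hnot (List.mem_toFinset.1 h)⟩))))
  exact hcdf (listArcs_exit_unique hc hd ha hb hpair hcdP hab)

end Menger

section Orientation

variable {V : Type*} {G : SimpleGraph V} {A : Finset (V × V)}

lemma reachable_induce_of_reflTransGen {W : Set V} {x y : V}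
    (h : Relation.ReflTransGen (fun s t => (s, t) ∈ A ∧ s ∈ W ∧ t ∈ W) x y)
    (hor : IsOrientation G A) (hx : x ∈ W) (hy : y ∈ W) :
    (G.induce W).Reachable ⟨x, hx⟩ ⟨y, hy⟩ := by
  induction h with
  | refl => rfl
  | @tail b c _ hbc ih =>
    exact (ih hbc.2.1).trans (SimpleGraph.Adj.reachable ((hor.1 b c).2 (.inl hbc.1)))

variable [DecidableEq V] {v c c' : V} {f : V × V}

lemma not_reaches_erase_of_mem (hA : ∀ a b : V, ¬((a, b) ∈ A ∧ (b, a) ∈ A))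
    (hcv : Reaches A c v) (hf : TwoReaches A f.2 v) (hc : ¬Reaches (A.erase f) c v)
    (hc' : ¬TwoReaches A c' v) (hc'c : (c', c) ∈ A) : ¬Reaches (A.erase f) c' v := by
  intro hc'v
  obtain ⟨f', -, hf'⟩ := exists_not_reaches_erase hA (hc'v.mono (Finset.erase_subset f A)) hc'
  have hff' : f ≠ f' := by
    rintro rfl
    exact hf' hc'v
  have hf'2 : Reaches (A.erase f) f'.2 v := reaches_snd_of_not_reaches_erase hc'v
    fun h => hf' (h.mono (Finset.erase_subset_erase f' (Finset.erase_subset f A)))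
  have hcf' : ¬Reaches (A.erase f') c v := fun h => by
    by_cases hc'cf' : (c', c) = f'
    · rw [← hc'cf'] at hf'2
      exact hc hf'2
    · exact hf' ((reaches_of_mem (Finset.mem_erase.2 ⟨hc'cf', hc'c⟩)).trans h)
  exact (reaches_erase_or_reaches_erase hcv hff' (hf.reaches_erase f') hf'2).elim hc hcf'

lemma not_reaches_erase_of_adj (hor : IsOrientation G A) (hcv : Reaches A c v)
    (hf : TwoReaches A f.2 v) (hc : ¬Reaches (A.erase f) c v) (hc' : ¬TwoReaches A c' v)
    (hadj : G.Adj c c') : ¬Reaches (A.erase f) c' v := by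
  rcases (hor.1 c c').1 hadj with hcc' | hc'c
  · intro hc'v
    obtain rfl := eq_of_not_reaches_erase hc hcc' hc'v
    exact hc' hf
  · exact not_reaches_erase_of_mem hor.2 hcv hf hc hc' hc'c

lemma not_reaches_erase_of_reachable (hor : IsOrientation G A) (hsc : StronglyConnected A)
    {W : Set V} (hW : ∀ w ∈ W, ¬TwoReaches A w v) (hf : TwoReaches A f.2 v) {a b : W}
    (hab : (G.induce W).Reachable a b) (ha : ¬Reaches (A.erase f) a v) :
    ¬Reaches (A.erase f) b v := by
  replace hab := (SimpleGraph.reachable_iff_reflTransGen a b).1 hab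
  induction hab with
  | refl => exact ha
  | @tail b c _ hbc ih => exact not_reaches_erase_of_adj hor (hsc b v) hf ih (hW c c.2) hbc

end Orientation

section Counting

variable {V : Type*} [DecidableEq V] {G : SimpleGraph V} {A : Finset (V × V)}

lemma sum_inDeg_eq_card_add_card (U : Finset V) :
    ∑ u ∈ U, inDeg A u =
      (A.filter fun e => e.1 ∈ U ∧ e.2 ∈ U).card + (A.filter fun e => e.1 ∉ U ∧ e.2 ∈ U).card := by
  simp only [inDeg]
  rw [Finset.sum_card_fiberwise_eq_card_filter A U Prod.snd,
    ← Finset.card_filter_add_card_filter_not (s := A.filter fun e => e.2 ∈ U) (·.1 ∈ U),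
    Finset.filter_filter, Finset.filter_filter]
  simp only [and_comm]

lemma card_edgeSet_induce (hor : IsOrientation G A) (U : Finset V) :
    Nat.card (G.induce (↑U : Set V)).edgeSet = (A.filter fun e => e.1 ∈ U ∧ e.2 ∈ U).card := by
  rw [← Nat.card_eq_finsetCard]
  refine (Nat.card_eq_of_bijective
    (fun e => ⟨s(⟨e.1.1, (Finset.mem_filter.1 e.2).2.1⟩, ⟨e.1.2, (Finset.mem_filter.1 e.2).2.2⟩),
      (hor.1 _ _).2 (.inl (Finset.mem_filter.1 e.2).1)⟩) ⟨?_, ?_⟩).symm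
  · rintro ⟨⟨a, b⟩, hab⟩ ⟨⟨c, d⟩, hcd⟩ h
    replace h := congrArg Subtype.val h
    simp only [Sym2.eq_iff, Subtype.mk.injEq] at h
    rcases h with ⟨rfl, rfl⟩ | ⟨rfl, rfl⟩
    · rfl
    · exact absurd ⟨(Finset.mem_filter.1 hab).1, (Finset.mem_filter.1 hcd).1⟩ (hor.2 a b)
  · rintro ⟨e, he⟩
    induction e using Sym2.ind with
    | _ a b =>
    rcases (hor.1 a b).1 he with h | h
    · exact ⟨⟨(a, b), Finset.mem_filter.2 ⟨h, a.2, b.2⟩⟩, rfl⟩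
    · exact ⟨⟨(b, a), Finset.mem_filter.2 ⟨h, b.2, a.2⟩⟩, Subtype.ext Sym2.eq_swap⟩

variable {v : V} {U : Finset V}

/-- Both arcs are the arc separating the component from `v`. -/
lemma eq_of_reachable_induce_compl (hor : IsOrientation G A) (hsc : StronglyConnected A)
    (hU : ∀ u : V, u ∈ U ↔ TwoReaches A u v) {a b c d : V} (hab : (a, b) ∈ A) (ha : a ∉ U)
    (hb : b ∈ U) (hcd : (c, d) ∈ A) (hc : c ∉ U) (hd : d ∈ U)
    (hac : (G.induce (↑U : Set V)ᶜ).Reachable ⟨a, by simpa using ha⟩ ⟨c, by simpa using hc⟩) :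
    (a, b) = (c, d) := by
  obtain ⟨f, -, hf⟩ := exists_not_reaches_erase hor.2 (hsc a v) fun h => ha ((hU a).2 h)
  obtain rfl := eq_of_not_reaches_erase hf hab (((hU b).1 hb).reaches_erase f)
  have hcf := not_reaches_erase_of_reachable hor hsc (W := (↑U : Set V)ᶜ)
    (fun w hw h => hw ((hU w).2 h)) ((hU b).1 hb) hac hf
  exact (eq_of_not_reaches_erase hcf hcd (((hU d).1 hd).reaches_erase _)).symm

lemma card_connectedComponent_induce_compl (hor : IsOrientation G A) (hsc : StronglyConnected A)
    (hU : ∀ u : V, u ∈ U ↔ TwoReaches A u v) :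
    Nat.card (G.induce (↑U : Set V)ᶜ).ConnectedComponent =
      (A.filter fun e => e.1 ∉ U ∧ e.2 ∈ U).card := by
  rw [← Nat.card_eq_finsetCard]
  refine (Nat.card_eq_of_bijective (fun e => (G.induce (↑U : Set V)ᶜ).connectedComponentMk
    ⟨e.1.1, by simpa using (Finset.mem_filter.1 e.2).2.1⟩) ⟨?_, ?_⟩).symm
  · rintro ⟨⟨a, b⟩, hab⟩ ⟨⟨c, d⟩, hcd⟩ h
    obtain ⟨hab, ha, hb⟩ := Finset.mem_filter.1 hab
    obtain ⟨hcd, hc, hd⟩ := Finset.mem_filter.1 hcd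
    exact Subtype.ext (eq_of_reachable_induce_compl hor hsc hU hab ha hb hcd hc hd
      (SimpleGraph.ConnectedComponent.exact h))
  · refine SimpleGraph.ConnectedComponent.ind fun ⟨x, hx⟩ => ?_
    have hvU : v ∉ (↑U : Set V)ᶜ := by simpa using (hU v).2 (twoReaches_refl A v)
    obtain ⟨a, b, hxa, ha, hab, hb⟩ := (reaches_iff_reflTransGen.1 (hsc x v)).exists_exit hx hvU
    refine ⟨⟨(a, b), Finset.mem_filter.2 ⟨hab, by simpa using ha, by simpa using hb⟩⟩, ?_⟩
    exact SimpleGraph.ConnectedComponent.sound (reachable_induce_of_reflTransGen hxa hor hx ha).symm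

end Counting

theorem stmt_9_general {V : Type*} [DecidableEq V] (G : SimpleGraph V)
    (A : Finset (V × V)) (hor : IsOrientation G A) (hsc : StronglyConnected A)
    (v : V) (U : Finset V) (hU : ∀ u : V, u ∈ U ↔ TwoReaches A u v) :
    ∑ u ∈ U, inDeg A u =
      Nat.card (G.induce (↑U : Set V)).edgeSet +
        Nat.card ((G.induce ((↑U : Set V)ᶜ)).ConnectedComponent) := by
  rw [sum_inDeg_eq_card_add_card, card_edgeSet_induce hor,
    card_connectedComponent_induce_compl hor hsc hU]

/-- For a strongly connected orientation `A` of a simple graph `G`, if `U` is the set of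
vertices two-reaching `v`, then the sum of indegrees over `U` equals the number of edges
of `G[U]` plus the number of connected components of `G[V ∖ U]`. -/
theorem stmt_9 {V : Type*} [Fintype V] [DecidableEq V] (G : SimpleGraph V)
    (A : Finset (V × V)) (hor : IsOrientation G A) (hsc : StronglyConnected A)
    (v : V) (U : Finset V) (hU : ∀ u : V, u ∈ U ↔ TwoReaches A u v) :
    ∑ u ∈ U, inDeg A u =
      Nat.card (G.induce (↑U : Set V)).edgeSet +
        Nat.card ((G.induce ((↑U : Set V)ᶜ)).ConnectedComponent) :=
  stmt_9_general G A hor hsc v U hU
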